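/- Let β be a probability distribution over states S[h] = {h} × {0,...,h-1} × 𝔽₂ and let f, with values in [0,1], be defined on S[h]. Define α := Σ_s β(s)f(s) and the joint distribution μ_{β,f} on 𝔽₂^{h+1} by drawing s = (h,k,b_h) ~ β, then B ∈ 𝔽₂^h uniform conditioned on Σ_{i<h} 1[B_i=1] = k and B_h = b_h, then F ~ Ber(f(s)). Suppose for ε > 0 that for all 1 ≤ m < h, |P_{μ_{β,f}}[B₁+⋯+B_m+F ≡ 0 mod 2] - 1/2| ≤ ε and similarly under μ_{β,α} (constant label α), and for all 0 ≤ m < h, |P_{μ_{β,f}}[B₁+⋯+B_m+B_h+F ≡ 0 mod 2] - 1/2| ≤ ε and similarly under μ_{β,α}. Then Σ_{s∈S[h]} β(s)|f(s) - α| ≤ C(h)·ε where C(h) = 4√2·(2h)^{3(h+1)²}. -/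

import Mathlib

/-!
Write `φ(B) = μ_{β,f}(B, F = 1) - μ_{β,α}(B, F = 1)` for the signed density on `𝔽₂^h`. Averaging
out `F`, the Walsh coefficient `Σ_B φ(B) (-1)^{z·B}` is the difference of the probabilities of the
parity `z·B + F = 0` under `μ_{β,α}` and `μ_{β,f}`. Since `φ` is invariant under permutations of
the first `h - 1` coordinates, so is its Walsh transform, and every `z` may be replaced by the
vector `1^m 0^{h-1-m} z_h`: for `(m, z_h) ≠ (0, 0)` the hypotheses bound the coefficient by `2ε`,
and at `z = 0` it is `Σ_s β(s) (f(s) - α) = 0`. Fourier inversion then gives `|φ| ≤ 2ε`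
pointwise, and as `φ = β(s) (f(s) - α) / C(h-1, k)` on the fibre of the state `s = (k, b)`, each
state contributes `β(s) |f(s) - α| ≤ 2 · C(h-1, k) · ε ≤ 2^h ε`; there are `2h` states.
-/

/-- The pmf of `Ber(p)` on `𝔽₂`. -/
noncomputable def berZ (p : ℝ) (x : ZMod 2) : ℝ := if x = 1 then p else 1 - p

/-- The Hamming weight of the first `h - 1` coordinates of `B ∈ 𝔽₂^h`. -/
def prefixWeight (h : ℕ) (B : Fin h → ZMod 2) : ℕ :=
  (Finset.univ.filter (fun i : Fin h => (i : ℕ) < h - 1 ∧ B i = 1)).card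

/-- The last coordinate `B_h` of `B ∈ 𝔽₂^h` (junk `0` if `h = 0`). -/
def lastCoord (h : ℕ) (B : Fin h → ZMod 2) : ZMod 2 :=
  if hh : h - 1 < h then B ⟨h - 1, hh⟩ else 0

/-- The pmf of `μ_{β,f} = Σ_s β(s) · (ν_s × Ber(f(s)))` on `𝔽₂^h × 𝔽₂`, where for a state
`s = (k, b_h)`, `ν_s` is the uniform distribution on vectors `B ∈ 𝔽₂^h` with Hamming
weight `k` among the first `h-1` coordinates and `B_h = b_h`. -/
noncomputable def muDensity (h : ℕ) (β f : ℕ × ZMod 2 → ℝ)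
    (B : Fin h → ZMod 2) (F : ZMod 2) : ℝ :=
  β (prefixWeight h B, lastCoord h B) / ((h - 1).choose (prefixWeight h B) : ℝ) *
    berZ (f (prefixWeight h B, lastCoord h B)) F

/-- `P_{(B,F) ~ μ_{β,f}}[B₁ + ⋯ + B_m + r·B_h + F ≡ 0 (mod 2)]`. -/
noncomputable def parityProb (h : ℕ) (β f : ℕ × ZMod 2 → ℝ) (m : ℕ) (r : ZMod 2) : ℝ :=
  ∑ B : Fin h → ZMod 2, ∑ F : ZMod 2,
    muDensity h β f B F *
      (if (∑ i : Fin h, if (i : ℕ) < m then B i else 0) + r * lastCoord h B + F = 0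
        then 1 else 0)

open Finset Matrix

lemma zmod_two_eq_zero_or_eq_one (x : ZMod 2) : x = 0 ∨ x = 1 := by
  revert x
  decide

noncomputable def signChar : AddChar (ZMod 2) ℝ where
  toFun x := (-1) ^ x.val
  map_zero_eq_one' := by simp
  map_add_eq_mul' x y := by rw [ZMod.val_add, ← neg_one_pow_eq_pow_mod_two, pow_add]

lemma signChar_apply (x : ZMod 2) : signChar x = (-1) ^ x.val := rfl

lemma signChar_one : signChar 1 = -1 := by
  rw [signChar_apply, ZMod.val_one, pow_one]

lemma abs_signChar (x : ZMod 2) : |signChar x| = 1 := by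
  rw [signChar_apply, abs_pow, abs_neg, abs_one, one_pow]

section Walsh

variable {ι : Type*} [Fintype ι]

noncomputable def walshChar (w : ι → ZMod 2) : AddChar (ι → ZMod 2) ℝ where
  toFun z := signChar (w ⬝ᵥ z)
  map_zero_eq_one' := by simp
  map_add_eq_mul' z z' := by rw [dotProduct_add, AddChar.map_add_eq_mul]

lemma walshChar_apply (w z : ι → ZMod 2) : walshChar w z = signChar (w ⬝ᵥ z) := rfl

lemma walshChar_comm (w z : ι → ZMod 2) : walshChar w z = walshChar z w := by
  rw [walshChar_apply, walshChar_apply, dotProduct_comm]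

variable [DecidableEq ι]

lemma walshChar_eq_zero_iff {w : ι → ZMod 2} : walshChar w = 0 ↔ w = 0 := by
  refine ⟨fun hw => funext fun i => ?_,
    fun hw => AddChar.eq_zero_iff.2 fun z => by simp [hw, walshChar_apply]⟩
  have := AddChar.eq_zero_iff.1 hw (Pi.single i 1)
  rw [walshChar_apply, dotProduct_single, mul_one] at this
  rcases zmod_two_eq_zero_or_eq_one (w i) with h0 | h1
  · exact h0
  · rw [h1, signChar_one] at this
    norm_num at this

lemma sum_walshChar (w : ι → ZMod 2) :
    ∑ z, walshChar w z = if w = 0 then (2 : ℝ) ^ Fintype.card ι else 0 := by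
  rw [AddChar.sum_eq_ite]
  simp [walshChar_eq_zero_iff]

noncomputable def walshCoeff (φ : (ι → ZMod 2) → ℝ) (w : ι → ZMod 2) : ℝ :=
  ∑ B, φ B * walshChar w B

lemma sum_walshCoeff_mul_walshChar (φ : (ι → ZMod 2) → ℝ) (B : ι → ZMod 2) :
    ∑ w, walshCoeff φ w * walshChar w B = 2 ^ Fintype.card ι * φ B := by
  have hneg : -B = B := funext fun i => ZMod.neg_eq_self_mod_two (B i)
  have hsum (B' : ι → ZMod 2) : ∑ w, walshChar w B' * walshChar w B
      = if B' = B then (2 : ℝ) ^ Fintype.card ι else 0 := by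
    simp_rw [← AddChar.map_add_eq_mul, walshChar_comm _ (B' + B), sum_walshChar,
      add_eq_zero_iff_eq_neg, hneg]
  simp_rw [walshCoeff, sum_mul, mul_assoc]
  rw [sum_comm]
  simp_rw [← mul_sum, hsum, mul_ite, mul_zero, sum_ite_eq', mem_univ, if_true, mul_comm]

lemma abs_le_of_abs_walshCoeff_le {φ : (ι → ZMod 2) → ℝ} {c : ℝ}
    (hc : ∀ w, |walshCoeff φ w| ≤ c) (B : ι → ZMod 2) : |φ B| ≤ c := by
  have hpos : (0 : ℝ) < 2 ^ Fintype.card ι := by positivity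
  refine le_of_mul_le_mul_left ?_ hpos
  calc 2 ^ Fintype.card ι * |φ B| = |∑ w, walshCoeff φ w * walshChar w B| := by
        rw [sum_walshCoeff_mul_walshChar, abs_mul, abs_of_pos hpos]
    _ ≤ ∑ w, |walshCoeff φ w| := by
        refine (abs_sum_le_sum_abs _ _).trans_eq (sum_congr rfl fun w _ => ?_)
        rw [abs_mul, walshChar_apply, abs_signChar, mul_one]
    _ ≤ ∑ _w : ι → ZMod 2, c := sum_le_sum fun w _ => hc w
    _ = 2 ^ Fintype.card ι * c := by simp

lemma walshCoeff_comp_perm {φ : (ι → ZMod 2) → ℝ} (σ : Equiv.Perm ι)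
    (hφ : ∀ B, φ (B ∘ σ) = φ B) (w : ι → ZMod 2) :
    walshCoeff φ (w ∘ σ) = walshCoeff φ w := by
  refine Fintype.sum_equiv (σ.arrowCongr (Equiv.refl (ZMod 2))) _ _ fun B => ?_
  have hφ' : φ (B ∘ σ.symm) = φ B := by simpa [Function.comp_assoc] using (hφ (B ∘ σ.symm)).symm
  show φ B * signChar (w ∘ σ ⬝ᵥ B) = φ (B ∘ σ.symm) * signChar (w ⬝ᵥ B ∘ σ.symm)
  rw [dotProduct_comp_equiv_symm, hφ']

end Walsh

theorem Equiv.Perm.exists_comp_eq_of_card_fiber_eq {ι κ : Type*} [Fintype ι] [DecidableEq κ]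
    {t t' : ι → κ} (h : ∀ c, #{i | t i = c} = #{i | t' i = c}) :
    ∃ σ : Equiv.Perm ι, t ∘ σ = t' :=
  ⟨Equiv.ofFiberEquiv fun c =>
      Fintype.equivOfCardEq (by simp only [Fintype.card_subtype, h]),
    funext (Equiv.ofFiberEquiv_map _)⟩

lemma Fin.val_lt_iff_ne_last {n : ℕ} (i : Fin (n + 1)) : (i : ℕ) < n ↔ i ≠ Fin.last n := by
  rw [← Fin.lt_last_iff_ne_last, Fin.lt_def, Fin.val_last]

section States

variable (n : ℕ)

def state (B : Fin (n + 1) → ZMod 2) : ℕ × ZMod 2 :=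
  (prefixWeight (n + 1) B, lastCoord (n + 1) B)

lemma lastCoord_succ (B : Fin (n + 1) → ZMod 2) : lastCoord (n + 1) B = B (Fin.last n) := by
  simp [lastCoord, Fin.last]

lemma prefixWeight_succ (B : Fin (n + 1) → ZMod 2) :
    prefixWeight (n + 1) B = #{i : Fin (n + 1) | (i : ℕ) < n ∧ B i = 1} := rfl

lemma prefixWeight_le (B : Fin (n + 1) → ZMod 2) : prefixWeight (n + 1) B ≤ n :=
  calc prefixWeight (n + 1) B ≤ #{i : Fin (n + 1) | (i : ℕ) < n} :=
        card_le_card (monotone_filter_right _ fun _ _ hi => hi.1)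
    _ = n := by simp [Fin.card_filter_val_lt]

lemma card_prefix_eq_zero_add_prefixWeight (B : Fin (n + 1) → ZMod 2) :
    #{i : Fin (n + 1) | (i : ℕ) < n ∧ B i = 0} + prefixWeight (n + 1) B = n := by
  have := card_filter_add_card_filter_not (s := {i : Fin (n + 1) | (i : ℕ) < n}) (B · = 0)
  have hne (x : ZMod 2) : ¬x = 0 ↔ x = 1 := by
    rcases zmod_two_eq_zero_or_eq_one x with rfl | rfl <;> decide
  simp only [filter_filter, Fin.card_filter_val_lt, hne, min_eq_right n.le_succ] at this
  exact this

/-- Masking the last coordinate as `none` forces a permutation matching `prefixCoord z` with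
`prefixCoord z'` to fix the last position. -/
def prefixCoord (B : Fin (n + 1) → ZMod 2) (i : Fin (n + 1)) : Option (ZMod 2) :=
  if (i : ℕ) < n then some (B i) else none

lemma exists_perm_comp_eq_of_state_eq {z z' : Fin (n + 1) → ZMod 2}
    (hz : state n z = state n z') :
    ∃ σ : Equiv.Perm (Fin (n + 1)), (∀ i, (σ i : ℕ) < n ↔ (i : ℕ) < n) ∧ z ∘ σ = z' := by
  have hw : prefixWeight (n + 1) z = prefixWeight (n + 1) z' := congrArg Prod.fst hz
  have hl : z (Fin.last n) = z' (Fin.last n) := by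
    simpa only [state, lastCoord_succ] using congrArg Prod.snd hz
  have hcard (c : Option (ZMod 2)) :
      #{i | prefixCoord n z i = c} = #{i | prefixCoord n z' i = c} := by
    rcases c with _ | v
    · simp [prefixCoord]
    · simp only [prefixCoord, Option.ite_none_right_eq_some, Option.some_inj]
      rcases zmod_two_eq_zero_or_eq_one v with rfl | rfl
      · have := card_prefix_eq_zero_add_prefixWeight n z
        have := card_prefix_eq_zero_add_prefixWeight n z'
        omega
      · exact hw
  obtain ⟨σ, hσ⟩ := Equiv.Perm.exists_comp_eq_of_card_fiber_eq hcard
  have hσi (i : Fin (n + 1)) := congrFun hσ i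
  simp only [Function.comp_apply, prefixCoord] at hσi
  refine ⟨σ, fun i => ?_, funext fun i => ?_⟩
  · have := hσi i
    split_ifs at this <;> omega
  · have := hσi i
    split_ifs at this with h₁ h₂ h₂
    · exact Option.some_inj.1 this
    · show z (σ i) = z' i
      rwa [(Fin.val_lt_iff_ne_last _).not_left.1 h₁, (Fin.val_lt_iff_ne_last _).not_left.1 h₂]

lemma state_comp_perm {σ : Equiv.Perm (Fin (n + 1))} (hσ : ∀ i, (σ i : ℕ) < n ↔ (i : ℕ) < n)
    (B : Fin (n + 1) → ZMod 2) : state n (B ∘ σ) = state n B := by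
  have hlast : σ (Fin.last n) = Fin.last n := by
    simpa [Fin.val_lt_iff_ne_last] using hσ (Fin.last n)
  refine Prod.ext ?_ ?_
  · show prefixWeight (n + 1) (B ∘ σ) = prefixWeight (n + 1) B
    rw [prefixWeight_succ, prefixWeight_succ]
    exact card_equiv σ fun i => by simp [hσ]
  · simp [state, lastCoord_succ, hlast]

lemma walshCoeff_eq_of_state_eq {φ : (Fin (n + 1) → ZMod 2) → ℝ}
    (hφ : ∀ B B', state n B = state n B' → φ B = φ B') {z z' : Fin (n + 1) → ZMod 2}
    (hz : state n z = state n z') : walshCoeff φ z = walshCoeff φ z' := by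
  obtain ⟨σ, hσ, rfl⟩ := exists_perm_comp_eq_of_state_eq n hz
  exact (walshCoeff_comp_perm σ (fun B => hφ _ _ (state_comp_perm n hσ B)) z).symm

def stateRep (m : ℕ) (r : ZMod 2) (i : Fin (n + 1)) : ZMod 2 :=
  (if (i : ℕ) < m then 1 else 0) + if i = Fin.last n then r else 0

lemma state_stateRep {m : ℕ} (hm : m ≤ n) (r : ZMod 2) : state n (stateRep n m r) = (m, r) := by
  refine Prod.ext ?_ ?_
  · calc prefixWeight (n + 1) (stateRep n m r) = #{i : Fin (n + 1) | (i : ℕ) < m} := by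
          rw [prefixWeight_succ]
          refine congrArg card (filter_congr fun i _ => ?_)
          rcases eq_or_ne i (Fin.last n) with rfl | hi
          · simp [stateRep, Nat.not_lt.2 hm]
          · have hin := (Fin.val_lt_iff_ne_last i).2 hi
            by_cases him : (i : ℕ) < m <;> simp [stateRep, hi, hin, him]
      _ = m := by rw [Fin.card_filter_val_lt, min_eq_right (by omega)]
  · simp [state, lastCoord_succ, stateRep, Nat.not_lt.2 hm]

lemma stateRep_dotProduct (m : ℕ) (r : ZMod 2) (B : Fin (n + 1) → ZMod 2) :
    stateRep n m r ⬝ᵥ B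
      = (∑ i : Fin (n + 1), if (i : ℕ) < m then B i else 0) + r * lastCoord (n + 1) B := by
  simp [dotProduct, stateRep, add_mul, ite_mul, sum_add_distrib, lastCoord_succ]

lemma card_filter_state_eq (k : ℕ) (b : ZMod 2) :
    #{B : Fin (n + 1) → ZMod 2 | state n B = (k, b)} = n.choose k := by
  set S : Finset (Fin (n + 1)) := {i | (i : ℕ) < n}
  have hS : #S = n := by simp [S, Fin.card_filter_val_lt]
  have hlast : Fin.last n ∉ S := by simp [S]
  have hmemS {i} (hi : i ≠ Fin.last n) : i ∈ S := by simpa [S, Fin.val_lt_iff_ne_last] using hi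
  set ofSet : Finset (Fin (n + 1)) → Fin (n + 1) → ZMod 2 :=
    fun A i => if i ∈ A then 1 else if i = Fin.last n then b else 0
  have hsupport {A} (hA : A ⊆ S) : S.filter (ofSet A · = 1) = A := by
    ext i
    by_cases hi : i ∈ A
    · simp [ofSet, hi, hA hi]
    · have : i ∈ S → i ≠ Fin.last n := fun h h' => hlast (h' ▸ h)
      simp +contextual [ofSet, hi, this]
  rw [show n.choose k = #(S.powersetCard k) by rw [card_powersetCard, hS]]
  refine card_nbij' (fun B => S.filter (B · = 1)) ofSet ?_ ?_ ?_ ?_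
  · intro B hB
    simp only [coe_filter, mem_univ, true_and, Set.mem_ofPred_eq, state, Prod.mk.injEq] at hB
    simp only [mem_coe, mem_powersetCard]
    exact ⟨filter_subset _ _, by rw [filter_filter]; exact hB.1⟩
  · intro A hA
    simp only [mem_coe, mem_powersetCard] at hA
    simp only [coe_filter, mem_univ, true_and, Set.mem_ofPred_eq, state, Prod.mk.injEq]
    refine ⟨?_, ?_⟩
    · rw [prefixWeight_succ, ← filter_filter (p := fun i : Fin (n + 1) => (i : ℕ) < n),
        hsupport hA.1, hA.2]
    · have : Fin.last n ∉ A := fun h => hlast (hA.1 h)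
      simp [lastCoord_succ, ofSet, this]
  · intro B hB
    simp only [coe_filter, mem_univ, true_and, Set.mem_ofPred_eq, state, Prod.mk.injEq] at hB
    funext i
    rcases eq_or_ne i (Fin.last n) with rfl | hi
    · simp [ofSet, hlast, ← hB.2, lastCoord_succ]
    · rcases zmod_two_eq_zero_or_eq_one (B i) with h | h <;> simp [ofSet, hi, hmemS hi, h]
  · intro A hA
    exact hsupport (mem_powersetCard.1 hA).1

lemma sum_div_choose_prefixWeight (g : ℕ × ZMod 2 → ℝ) :
    ∑ B : Fin (n + 1) → ZMod 2, g (state n B) / n.choose (prefixWeight (n + 1) B)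
      = ∑ k ∈ range (n + 1), ∑ b : ZMod 2, g (k, b) := by
  have hmaps : ∀ B ∈ (univ : Finset (Fin (n + 1) → ZMod 2)), state n B ∈ range (n + 1) ×ˢ univ :=
    fun B _ => mem_product.2 ⟨mem_range.2 (Nat.lt_succ_of_le (prefixWeight_le n B)), mem_univ _⟩
  rw [← sum_fiberwise_of_maps_to hmaps, sum_product]
  refine sum_congr rfl fun k hk => sum_congr rfl fun b _ => ?_
  have hchoose : (n.choose k : ℝ) ≠ 0 :=
    Nat.cast_ne_zero.2 (Nat.choose_pos (Nat.lt_succ_iff.1 (mem_range.1 hk))).ne'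
  have hfiber : ∀ B ∈ ({B | state n B = (k, b)} : Finset (Fin (n + 1) → ZMod 2)),
      g (state n B) / n.choose (prefixWeight (n + 1) B) = g (k, b) / n.choose k := by
    intro B hB
    have hB : state n B = (k, b) := (mem_filter.1 hB).2
    rw [hB, show prefixWeight (n + 1) B = k from congrArg Prod.fst hB]
  rw [sum_congr rfl hfiber, sum_const, card_filter_state_eq, nsmul_eq_mul, mul_div_cancel₀ _ hchoose]

end States

lemma sum_zmod_two {M : Type*} [AddCommMonoid M] (g : ZMod 2 → M) : ∑ x, g x = g 0 + g 1 :=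
  Fin.sum_univ_two g

lemma sum_berZ_mul_ite (p : ℝ) (x : ZMod 2) :
    ∑ F : ZMod 2, berZ p F * (if x + F = 0 then 1 else 0) = (1 + signChar x * (1 - 2 * p)) / 2 := by
  rw [sum_zmod_two]
  rcases zmod_two_eq_zero_or_eq_one x with rfl | rfl
  · simp only [berZ, zero_ne_one, one_ne_zero, if_false, if_true, zero_add, add_zero,
      mul_one, mul_zero, AddChar.map_zero_eq_one, one_mul]
    ring
  · simp [berZ, signChar_one, show (1 + 1 : ZMod 2) = 0 from rfl]

section Deviation

variable (n : ℕ) (β f : ℕ × ZMod 2 → ℝ) (α : ℝ)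

/-- The signed density `φ = μ_{β,f}(·, F = 1) - μ_{β,α}(·, F = 1)` of the header. -/
noncomputable def labelDeviation (B : Fin (n + 1) → ZMod 2) : ℝ :=
  β (state n B) * (f (state n B) - α) / n.choose (prefixWeight (n + 1) B)

lemma labelDeviation_eq_of_state_eq {B B' : Fin (n + 1) → ZMod 2} (h : state n B = state n B') :
    labelDeviation n β f α B = labelDeviation n β f α B' := by
  rw [labelDeviation, labelDeviation,
    show prefixWeight (n + 1) B = prefixWeight (n + 1) B' from congrArg Prod.fst h, h]

lemma parityProb_eq (m : ℕ) (r : ZMod 2) :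
    parityProb (n + 1) β f m r = ∑ B, β (state n B) / n.choose (prefixWeight (n + 1) B) *
      ((1 + walshChar (stateRep n m r) B * (1 - 2 * f (state n B))) / 2) := by
  refine sum_congr rfl fun B _ => ?_
  simp_rw [muDensity, mul_assoc, ← mul_sum, walshChar_apply, stateRep_dotProduct, sum_berZ_mul_ite]
  rfl

lemma parityProb_sub_parityProb (m : ℕ) (r : ZMod 2) :
    parityProb (n + 1) β (fun _ => α) m r - parityProb (n + 1) β f m r
      = walshCoeff (labelDeviation n β f α) (stateRep n m r) := by
  rw [parityProb_eq, parityProb_eq, ← sum_sub_distrib]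
  refine sum_congr rfl fun B _ => ?_
  rw [labelDeviation]
  ring

lemma walshCoeff_labelDeviation_zero (hβ1 : ∑ k ∈ range (n + 1), ∑ b : ZMod 2, β (k, b) = 1)
    (hα : α = ∑ k ∈ range (n + 1), ∑ b : ZMod 2, β (k, b) * f (k, b)) :
    walshCoeff (labelDeviation n β f α) 0 = 0 := by
  simp only [walshCoeff, walshChar_apply, zero_dotProduct, AddChar.map_zero_eq_one, mul_one]
  rw [show ∑ B, labelDeviation n β f α B = _ from
    sum_div_choose_prefixWeight n (fun s => β s * (f s - α))]
  simp_rw [mul_sub, sum_sub_distrib, ← sum_mul, hβ1, ← hα]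
  ring

lemma stateRep_zero_zero : stateRep n 0 0 = 0 := by
  funext i
  simp [stateRep]

lemma abs_walshCoeff_labelDeviation_le {ε : ℝ} (hε : 0 ≤ ε)
    (hβ1 : ∑ k ∈ range (n + 1), ∑ b : ZMod 2, β (k, b) = 1)
    (hα : α = ∑ k ∈ range (n + 1), ∑ b : ZMod 2, β (k, b) * f (k, b))
    (h1 : ∀ m : ℕ, 1 ≤ m → m < n + 1 →
      |parityProb (n + 1) β f m 0 - 1 / 2| ≤ ε ∧
      |parityProb (n + 1) β (fun _ => α) m 0 - 1 / 2| ≤ ε)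
    (h2 : ∀ m : ℕ, m < n + 1 →
      |parityProb (n + 1) β f m 1 - 1 / 2| ≤ ε ∧
      |parityProb (n + 1) β (fun _ => α) m 1 - 1 / 2| ≤ ε)
    (w : Fin (n + 1) → ZMod 2) :
    |walshCoeff (labelDeviation n β f α) w| ≤ 2 * ε := by
  have hparity {m : ℕ} {r : ZMod 2} (h : |parityProb (n + 1) β f m r - 1 / 2| ≤ ε ∧
      |parityProb (n + 1) β (fun _ => α) m r - 1 / 2| ≤ ε) :
      |walshCoeff (labelDeviation n β f α) (stateRep n m r)| ≤ 2 * ε := by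
    rw [← parityProb_sub_parityProb]
    have := abs_sub_le (parityProb (n + 1) β (fun _ => α) m r) (1 / 2) (parityProb (n + 1) β f m r)
    rw [abs_sub_comm (1 / 2)] at this
    linarith [h.1, h.2]
  rw [← walshCoeff_eq_of_state_eq n (fun _ _ => labelDeviation_eq_of_state_eq n β f α)
    (state_stateRep n (prefixWeight_le n w) (lastCoord (n + 1) w))]
  have hm : prefixWeight (n + 1) w < n + 1 := Nat.lt_succ_of_le (prefixWeight_le n w)
  generalize prefixWeight (n + 1) w = m at hm ⊢
  rcases zmod_two_eq_zero_or_eq_one (lastCoord (n + 1) w) with hr | hr <;> rw [hr]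
  · rcases Nat.eq_zero_or_pos m with rfl | hm0
    · rw [stateRep_zero_zero, walshCoeff_labelDeviation_zero n β f α hβ1 hα, abs_zero]
      positivity
    · exact hparity (h1 m hm0 hm)
  · exact hparity (h2 m hm)

lemma mul_abs_sub_le_of_abs_labelDeviation_le (hβ0 : ∀ s, 0 ≤ β s) {c : ℝ}
    (hc : ∀ B, |labelDeviation n β f α B| ≤ c) {k : ℕ} (hk : k ≤ n) (b : ZMod 2) :
    β (k, b) * |f (k, b) - α| ≤ 2 ^ n * c := by
  have hs := state_stateRep n hk b
  have hchoose : (0 : ℝ) < n.choose k := Nat.cast_pos.2 (Nat.choose_pos hk)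
  have hdev := hc (stateRep n k b)
  rw [labelDeviation, hs, show prefixWeight (n + 1) (stateRep n k b) = k from congrArg Prod.fst hs,
    abs_div, abs_mul, abs_of_nonneg (hβ0 _), Nat.abs_cast, div_le_iff₀ hchoose] at hdev
  calc β (k, b) * |f (k, b) - α| ≤ c * n.choose k := hdev
    _ ≤ c * 2 ^ n := by
        gcongr
        · exact (abs_nonneg _).trans (hc 0)
        · exact_mod_cast Nat.choose_le_two_pow n k
    _ = 2 ^ n * c := mul_comm _ _

end Deviation

lemma mul_two_pow_succ_le {h : ℕ} (hh : 0 < h) :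
    (h : ℝ) * 2 ^ (h + 1) ≤ 4 * Real.sqrt 2 * ((2 * h : ℕ) : ℝ) ^ (3 * (h + 1) ^ 2) := by
  have hnat : h * 2 ^ (h + 1) ≤ (2 * h) ^ (3 * (h + 1) ^ 2) :=
    calc h * 2 ^ (h + 1) ≤ (2 * h) * (2 * h) ^ (h + 1) :=
          Nat.mul_le_mul (by omega) (Nat.pow_le_pow_left (by omega) _)
      _ = (2 * h) ^ (h + 2) := (pow_succ' _ _).symm
      _ ≤ (2 * h) ^ (3 * (h + 1) ^ 2) := Nat.pow_le_pow_right (by omega) (by nlinarith)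
  have h4 : (1 : ℝ) ≤ 4 * Real.sqrt 2 := by nlinarith [Real.one_lt_sqrt_two]
  calc (h : ℝ) * 2 ^ (h + 1) ≤ ((2 * h : ℕ) : ℝ) ^ (3 * (h + 1) ^ 2) := by exact_mod_cast hnat
    _ ≤ _ := le_mul_of_one_le_left (by positivity) h4

theorem label_correlation_general (h : ℕ) (hh : 0 < h) (ε : ℝ) (hε : 0 < ε)
    (β f : ℕ × ZMod 2 → ℝ)
    (hβ0 : ∀ s, 0 ≤ β s)
    (hβ1 : ∑ k ∈ Finset.range h, ∑ b : ZMod 2, β (k, b) = 1)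
    (α : ℝ) (hα : α = ∑ k ∈ Finset.range h, ∑ b : ZMod 2, β (k, b) * f (k, b))
    (h1 : ∀ m : ℕ, 1 ≤ m → m < h →
      |parityProb h β f m 0 - 1 / 2| ≤ ε ∧
      |parityProb h β (fun _ => α) m 0 - 1 / 2| ≤ ε)
    (h2 : ∀ m : ℕ, m < h →
      |parityProb h β f m 1 - 1 / 2| ≤ ε ∧
      |parityProb h β (fun _ => α) m 1 - 1 / 2| ≤ ε) :
    ∑ k ∈ Finset.range h, ∑ b : ZMod 2, β (k, b) * |f (k, b) - α|
      ≤ (4 * Real.sqrt 2 * ((2 * h : ℕ) : ℝ) ^ (3 * (h + 1) ^ 2)) * ε := by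
  have hconst := mul_two_pow_succ_le hh
  obtain ⟨n, rfl⟩ : ∃ n, h = n + 1 := ⟨h - 1, by omega⟩
  have hdev := abs_le_of_abs_walshCoeff_le
    (abs_walshCoeff_labelDeviation_le n β f α hε.le hβ1 hα h1 h2)
  calc ∑ k ∈ range (n + 1), ∑ b : ZMod 2, β (k, b) * |f (k, b) - α|
      ≤ ∑ _k ∈ range (n + 1), ∑ _b : ZMod 2, 2 ^ n * (2 * ε) :=
        sum_le_sum fun k hk => sum_le_sum fun b _ =>
          mul_abs_sub_le_of_abs_labelDeviation_le n β f α hβ0 hdev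
            (Nat.lt_succ_iff.1 (mem_range.1 hk)) b
    _ = ((n + 1 : ℕ) : ℝ) * 2 ^ (n + 1 + 1) * ε := by
        simp only [sum_const, card_univ, ZMod.card, nsmul_eq_mul, card_range]
        push_cast
        ring
    _ ≤ _ := mul_le_mul_of_nonneg_right hconst hε.le

/-- Let `β` be a probability distribution over states
`S[h] = {0,...,h-1} × 𝔽₂` and `f : S[h] → [0,1]`, and set `α := Σ_s β(s) f(s)`.
If for all `1 ≤ m < h` the parities `B₁+⋯+B_m+F` are `ε`-unbiased under both `μ_{β,f}` and
`μ_{β,α}`, and for all `0 ≤ m < h` the parities `B₁+⋯+B_m+B_h+F` are `ε`-unbiased under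
both `μ_{β,f}` and `μ_{β,α}`, then `Σ_s β(s)|f(s) - α| ≤ 4√2·(2h)^{3(h+1)²}·ε`. -/
theorem label_correlation (h : ℕ) (hh : 0 < h) (ε : ℝ) (hε : 0 < ε)
    (β f : ℕ × ZMod 2 → ℝ)
    (hβ0 : ∀ s, 0 ≤ β s)
    (hβ1 : ∑ k ∈ Finset.range h, ∑ b : ZMod 2, β (k, b) = 1)
    (hf : ∀ s, f s ∈ Set.Icc (0 : ℝ) 1)
    (α : ℝ) (hα : α = ∑ k ∈ Finset.range h, ∑ b : ZMod 2, β (k, b) * f (k, b))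
    (h1 : ∀ m : ℕ, 1 ≤ m → m < h →
      |parityProb h β f m 0 - 1 / 2| ≤ ε ∧
      |parityProb h β (fun _ => α) m 0 - 1 / 2| ≤ ε)
    (h2 : ∀ m : ℕ, m < h →
      |parityProb h β f m 1 - 1 / 2| ≤ ε ∧
      |parityProb h β (fun _ => α) m 1 - 1 / 2| ≤ ε) :
    ∑ k ∈ Finset.range h, ∑ b : ZMod 2, β (k, b) * |f (k, b) - α|
      ≤ (4 * Real.sqrt 2 * ((2 * h : ℕ) : ℝ) ^ (3 * (h + 1) ^ 2)) * ε :=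
  label_correlation_general h hh ε hε β f hβ0 hβ1 α hα h1 h2
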